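/- arXiv:1805.08037 — 8 statements merged into one kernel-verified Lean document; each statement's English description precedes it below -/
import Mathlib

section
/- For all sets A, B, C of solution mappings, (A ⋈ B) ⋈ C = A ⋈ (B ⋈ C); that is, the SPARQL inner join (Basic Graph Pattern join) is associative. -/
/-- Two solution mappings are compatible if they agree wherever both are bound. -/
def Compatible {V D : Type*} (μ₁ μ₂ : V → Option D) : Prop :=
  ∀ v, μ₁ v = none ∨ μ₂ v = none ∨ μ₁ v = μ₂ v

/-- Merge of two solution mappings: the left binding takes precedence. -/
def mergeMap {V D : Type*} (μ₁ μ₂ : V → Option D) : V → Option D :=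
  fun v => (μ₁ v).orElse (fun _ => μ₂ v)

/-- SPARQL inner join of two sets of solution mappings. -/
def joinSet {V D : Type*} (A B : Set (V → Option D)) : Set (V → Option D) :=
  {μ | ∃ μ₁ ∈ A, ∃ μ₂ ∈ B, Compatible μ₁ μ₂ ∧ μ = mergeMap μ₁ μ₂}

/-- SPARQL difference: mappings in A with no compatible partner in B. -/
def diffSet {V D : Type*} (A B : Set (V → Option D)) : Set (V → Option D) :=
  {μ₁ ∈ A | ∀ μ₂ ∈ B, ¬ Compatible μ₁ μ₂}

/-- SPARQL left outer join (OPTIONAL). -/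
def leftJoinSet {V D : Type*} (A B : Set (V → Option D)) : Set (V → Option D) :=
  joinSet A B ∪ diffSet A B

/-- Semi-join: mappings in A having some compatible partner in B. -/
def semiJoin {V D : Type*} (A B : Set (V → Option D)) : Set (V → Option D) :=
  {μ₁ ∈ A | ∃ μ₂ ∈ B, Compatible μ₁ μ₂}

/-- Subsumption order: μ₂ binds everything μ₁ binds, to the same value. -/
def Subsumes {V D : Type*} (μ₁ μ₂ : V → Option D) : Prop :=
  ∀ v, μ₁ v ≠ none → μ₂ v = μ₁ v

/-- best-match: the subsumption-maximal elements of X. -/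
def bestMatch {V D : Type*} (X : Set (V → Option D)) : Set (V → Option D) :=
  {μ ∈ X | ∀ μ' ∈ X, Subsumes μ μ' → μ' = μ}

/-! Either bracketing of a triple join consists of the merges of pairwise compatible triples,
and merging is associative (`Option.orElse` is), so the two bracketings coincide. -/

section Join

variable {V D : Type*}

theorem mergeMap_assoc (a b c : V → Option D) :
    mergeMap (mergeMap a b) c = mergeMap a (mergeMap b c) := by
  funext v
  simp only [mergeMap]
  cases a v <;> rfl

theorem compatible_mergeMap_left_iff {a b c : V → Option D} (hab : Compatible a b) :
    Compatible (mergeMap a b) c ↔ Compatible a c ∧ Compatible b c := by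
  simp only [Compatible, mergeMap, ← forall_and]
  refine forall_congr' fun v => ?_
  specialize hab v
  revert hab
  cases a v <;> cases b v <;> cases c v <;> simp_all

theorem compatible_mergeMap_right_iff {a b c : V → Option D} (hbc : Compatible b c) :
    Compatible a (mergeMap b c) ↔ Compatible a b ∧ Compatible a c := by
  simp only [Compatible, mergeMap, ← forall_and]
  refine forall_congr' fun v => ?_
  specialize hbc v
  revert hbc
  cases a v <;> cases b v <;> cases c v <;> simp_all

theorem mem_joinSet_joinSet_left {A B C : Set (V → Option D)} {μ : V → Option D} :
    μ ∈ joinSet (joinSet A B) C ↔ ∃ a ∈ A, ∃ b ∈ B, ∃ c ∈ C,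
      Compatible a b ∧ Compatible a c ∧ Compatible b c ∧ μ = mergeMap (mergeMap a b) c := by
  constructor
  · rintro ⟨_, ⟨a, ha, b, hb, hab, rfl⟩, c, hc, habc, rfl⟩
    obtain ⟨hac, hbc⟩ := (compatible_mergeMap_left_iff hab).1 habc
    exact ⟨a, ha, b, hb, c, hc, hab, hac, hbc, rfl⟩
  · rintro ⟨a, ha, b, hb, c, hc, hab, hac, hbc, rfl⟩
    exact ⟨_, ⟨a, ha, b, hb, hab, rfl⟩, c, hc, (compatible_mergeMap_left_iff hab).2 ⟨hac, hbc⟩, rfl⟩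

theorem mem_joinSet_joinSet_right {A B C : Set (V → Option D)} {μ : V → Option D} :
    μ ∈ joinSet A (joinSet B C) ↔ ∃ a ∈ A, ∃ b ∈ B, ∃ c ∈ C,
      Compatible a b ∧ Compatible a c ∧ Compatible b c ∧ μ = mergeMap a (mergeMap b c) := by
  constructor
  · rintro ⟨a, ha, _, ⟨b, hb, c, hc, hbc, rfl⟩, habc, rfl⟩
    obtain ⟨hab, hac⟩ := (compatible_mergeMap_right_iff hbc).1 habc
    exact ⟨a, ha, b, hb, c, hc, hab, hac, hbc, rfl⟩
  · rintro ⟨a, ha, b, hb, c, hc, hab, hac, hbc, rfl⟩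
    exact ⟨a, ha, _, ⟨b, hb, c, hc, hbc, rfl⟩, (compatible_mergeMap_right_iff hbc).2 ⟨hab, hac⟩, rfl⟩

end Join

theorem join_assoc (V D : Type*) (A B C : Set (V → Option D)) :
    joinSet (joinSet A B) C = joinSet A (joinSet B C) := by
  ext μ
  rw [mem_joinSet_joinSet_left, mem_joinSet_joinSet_right]
  simp only [mergeMap_assoc]
end

section
/- For all sets A, B, C of solution mappings, (A ∪ B) ⟕ C = (A ⟕ C) ∪ (B ⟕ C); that is, the left outer join distributes over union in its left argument (UNION rewrite rule 1 for bringing a BGP-OPT-UNION query into Union Normal Form). -/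
section

variable {V D : Type*} (A B C : Set (V → Option D))

theorem joinSet_union_left : joinSet (A ∪ B) C = joinSet A C ∪ joinSet B C := by
  ext μ
  simp only [joinSet, Set.mem_union, Set.mem_ofPred_eq, or_and_right, exists_or]

theorem diffSet_union_left : diffSet (A ∪ B) C = diffSet A C ∪ diffSet B C :=
  Set.sep_union

end

theorem leftjoin_union_left_distrib (V D : Type*) (A B C : Set (V → Option D)) :
    leftJoinSet (A ∪ B) C = leftJoinSet A C ∪ leftJoinSet B C := by
  rw [leftJoinSet, joinSet_union_left, diffSet_union_left]
  exact Set.union_union_union_comm _ _ _ _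
end

section
/- There exist types V and D and sets A, B, C of solution mappings such that A ⟕ (B ∪ C) ≠ (A ⟕ B) ∪ (A ⟕ C); that is, rewriting P₁ ⟕ (P₂ ∪ P₃) as (P₁ ⟕ P₂) ∪ (P₁ ⟕ P₃) is not an equivalence under conventional union (UNION rewrite rule 3 can change the result set). -/
variable {V D : Type*}

theorem mem_leftJoinSet_of_forall_not_compatible {A B : Set (V → Option D)} {μ : V → Option D}
    (hμ : μ ∈ A) (hB : ∀ ν ∈ B, ¬ Compatible μ ν) : μ ∈ leftJoinSet A B :=
  Or.inr ⟨hμ, hB⟩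

theorem mem_leftJoinSet_singleton_iff {B : Set (V → Option D)} {μ : V → Option D} :
    μ ∈ leftJoinSet {μ} B ↔
      (∃ ν ∈ B, Compatible μ ν ∧ mergeMap μ ν = μ) ∨ ∀ ν ∈ B, ¬ Compatible μ ν := by
  simp only [leftJoinSet, joinSet, diffSet, Set.mem_union, Set.mem_ofPred_eq,
    Set.mem_singleton_iff, exists_eq_left, true_and]
  exact or_congr_left (exists_congr fun _ => and_congr_right' (and_congr_right' eq_comm))

/-- `a` survives unextended in `{a} ⟕ {b}`, but in `{a} ⟕ {b, c}` its only compatible partner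
`c` forces it to be replaced by the strictly larger `a ⊔ c`. -/
theorem leftJoinSet_union_ne_of_extension {a b c : V → Option D} (hab : ¬ Compatible a b)
    (hac : Compatible a c) (hext : mergeMap a c ≠ a) :
    leftJoinSet {a} ({b} ∪ {c}) ≠ leftJoinSet {a} {b} ∪ leftJoinSet {a} {c} := by
  intro h
  have ha_rhs : a ∈ leftJoinSet {a} {b} ∪ leftJoinSet {a} {c} :=
    Or.inl (mem_leftJoinSet_of_forall_not_compatible rfl fun ν hν => hν ▸ hab)
  rw [← h, mem_leftJoinSet_singleton_iff] at ha_rhs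
  rcases ha_rhs with ⟨ν, rfl | rfl, hcomp, hmerge⟩ | hnone
  · exact hab hcomp
  · exact hext hmerge
  · exact hnone c (Or.inr rfl) hac

theorem leftjoin_union_right_not_distrib :
    ∃ (V D : Type) (A B C : Set (V → Option D)),
      leftJoinSet A (B ∪ C) ≠ leftJoinSet A B ∪ leftJoinSet A C := by
  let a : Bool → Option Bool := fun v => if v then some true else none
  let b : Bool → Option Bool := fun v => if v then some false else none
  let c : Bool → Option Bool := fun v => if v then none else some true
  have hab : ¬ Compatible a b := by unfold Compatible; decide
  have hac : Compatible a c := by unfold Compatible; decide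
  have hext : mergeMap a c ≠ a := fun h => by simpa [mergeMap, a, c] using congrFun h false
  exact ⟨Bool, Bool, {a}, {b}, {c}, leftJoinSet_union_ne_of_extension hab hac hext⟩
end

section
/- For all sets A, B, C of solution mappings, A ⟕ (B ∪ C) ⊆ (A ⟕ B) ∪ (A ⟕ C); that is, the Union Normal Form rewrite of P₁ ⟕ (P₂ ∪ P₃) never loses results of the original pattern. -/
section SolutionMappings

variable {V D : Type*} {A B B' C : Set (V → Option D)}

theorem joinSet_union_right : joinSet A (B ∪ C) = joinSet A B ∪ joinSet A C := by
  ext μ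
  constructor
  · rintro ⟨μ₁, h₁, μ₂, hB | hC, hc, rfl⟩
    · exact Or.inl ⟨μ₁, h₁, μ₂, hB, hc, rfl⟩
    · exact Or.inr ⟨μ₁, h₁, μ₂, hC, hc, rfl⟩
  · rintro (⟨μ₁, h₁, μ₂, h₂, hc, rfl⟩ | ⟨μ₁, h₁, μ₂, h₂, hc, rfl⟩)
    · exact ⟨μ₁, h₁, μ₂, Or.inl h₂, hc, rfl⟩
    · exact ⟨μ₁, h₁, μ₂, Or.inr h₂, hc, rfl⟩

theorem diffSet_anti_right (h : B ⊆ B') : diffSet A B' ⊆ diffSet A B :=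
  fun _ ⟨hA, hB'⟩ => ⟨hA, fun μ₂ hμ₂ => hB' μ₂ (h hμ₂)⟩

theorem joinSet_subset_leftJoinSet : joinSet A B ⊆ leftJoinSet A B :=
  Set.subset_union_left

theorem diffSet_subset_leftJoinSet : diffSet A B ⊆ leftJoinSet A B :=
  Set.subset_union_right

end SolutionMappings

theorem leftjoin_union_right_subset (V D : Type*) (A B C : Set (V → Option D)) :
    leftJoinSet A (B ∪ C) ⊆ leftJoinSet A B ∪ leftJoinSet A C := by
  refine Set.union_subset ?_ ?_
  · rw [joinSet_union_right]
    exact Set.union_subset_union joinSet_subset_leftJoinSet joinSet_subset_leftJoinSet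
  · exact (diffSet_anti_right Set.subset_union_left).trans
      (diffSet_subset_leftJoinSet.trans Set.subset_union_left)
end

section
/- For all sets A, B, C of solution mappings, every mapping μ ∈ (A ⟕ B) ∪ (A ⟕ C) satisfies μ ⊑ μ' for some μ' ∈ A ⟕ (B ∪ C); that is, every result produced by the Union Normal Form rewrite of P₁ ⟕ (P₂ ∪ P₃) is subsumed by (or equal to) a result of the original pattern. -/
/-!
A result of `A ⟕ B` is either a merge `μ₁ ⊔ μ₂` with `μ₂ ∈ B`, which is also a result of
`A ⟕ (B ∪ C)`, or a mapping `μ ∈ A` without partner in `B`. If such a `μ` has a partner in `C`,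
its merge with that partner extends it; otherwise it survives unchanged. So enlarging the optional
side of a left outer join only extends its results.
-/

theorem Subsumes.refl {V D : Type*} (μ : V → Option D) : Subsumes μ μ :=
  fun _ _ => rfl

theorem subsumes_mergeMap {V D : Type*} (μ₁ μ₂ : V → Option D) :
    Subsumes μ₁ (mergeMap μ₁ μ₂) := by
  intro v hv
  obtain ⟨d, hd⟩ := Option.ne_none_iff_exists'.mp hv
  simp [mergeMap, hd]

theorem mergeMap_mem_joinSet {V D : Type*} {A B : Set (V → Option D)} {μ₁ μ₂ : V → Option D}
    (h₁ : μ₁ ∈ A) (h₂ : μ₂ ∈ B) (hc : Compatible μ₁ μ₂) : mergeMap μ₁ μ₂ ∈ joinSet A B :=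
  ⟨μ₁, h₁, μ₂, h₂, hc, rfl⟩

theorem joinSet_mono_right {V D : Type*} {A B B' : Set (V → Option D)} (h : B ⊆ B') :
    joinSet A B ⊆ joinSet A B' := by
  rintro _ ⟨μ₁, h₁, μ₂, h₂, hc, rfl⟩
  exact mergeMap_mem_joinSet h₁ (h h₂) hc

theorem exists_subsumes_mem_leftJoinSet_of_subset {V D : Type*} {A B B' : Set (V → Option D)}
    (hB : B ⊆ B') {μ : V → Option D} (hμ : μ ∈ leftJoinSet A B) :
    ∃ μ' ∈ leftJoinSet A B', Subsumes μ μ' := by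
  rcases hμ with hjoin | ⟨hA, -⟩
  · exact ⟨μ, Or.inl (joinSet_mono_right hB hjoin), Subsumes.refl μ⟩
  by_cases hpartner : ∃ μ₂ ∈ B', Compatible μ μ₂
  · obtain ⟨μ₂, h₂, hc⟩ := hpartner
    exact ⟨mergeMap μ μ₂, Or.inl (mergeMap_mem_joinSet hA h₂ hc), subsumes_mergeMap μ μ₂⟩
  · exact ⟨μ, Or.inr ⟨hA, fun μ₂ h₂ hc => hpartner ⟨μ₂, h₂, hc⟩⟩, Subsumes.refl μ⟩

theorem unf_rewrite_subsumed (V D : Type*) (A B C : Set (V → Option D)) :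
    ∀ μ ∈ leftJoinSet A B ∪ leftJoinSet A C,
      ∃ μ' ∈ leftJoinSet A (B ∪ C), Subsumes μ μ' := by
  rintro μ (hμ | hμ)
  · exact exists_subsumes_mem_leftJoinSet_of_subset Set.subset_union_left hμ
  · exact exists_subsumes_mem_leftJoinSet_of_subset Set.subset_union_right hμ
end

section
/- Let A and B be sets of solution mappings and let R : (V → Option D) → Prop be a filter condition such that for every μ₁ ∈ A and every mapping μ with μ₁ ⊑ μ, R μ holds if and only if R μ₁ holds (a safe filter whose value is determined by the bindings present in the mappings of A). Then {μ ∈ A ⟕ B | R μ} = {μ ∈ A | R μ} ⟕ B; that is, a safe FILTER can be pushed into the master pattern of a well-designed OPTIONAL: (P₁ ⟕ P₂)𝓕(R) ≡ (P₁𝓕(R)) ⟕ P₂ (FILTER rewrite rule 4). -/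
theorem sep_joinSet {V D : Type*} {A B : Set (V → Option D)} {R : (V → Option D) → Prop}
    (hsafe : ∀ μ₁ ∈ A, ∀ μ : V → Option D, Subsumes μ₁ μ → (R μ ↔ R μ₁)) :
    {μ ∈ joinSet A B | R μ} = joinSet {μ ∈ A | R μ} B := by
  ext μ
  constructor
  · rintro ⟨⟨μ₁, hμ₁, μ₂, hμ₂, hc, rfl⟩, hR⟩
    exact ⟨μ₁, ⟨hμ₁, (hsafe μ₁ hμ₁ _ (subsumes_mergeMap μ₁ μ₂)).mp hR⟩, μ₂, hμ₂, hc, rfl⟩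
  · rintro ⟨μ₁, ⟨hμ₁, hR⟩, μ₂, hμ₂, hc, rfl⟩
    exact ⟨⟨μ₁, hμ₁, μ₂, hμ₂, hc, rfl⟩, (hsafe μ₁ hμ₁ _ (subsumes_mergeMap μ₁ μ₂)).mpr hR⟩

theorem sep_diffSet {V D : Type*} (A B : Set (V → Option D)) (R : (V → Option D) → Prop) :
    {μ ∈ diffSet A B | R μ} = diffSet {μ ∈ A | R μ} B := by
  ext μ
  simp only [diffSet, Set.mem_ofPred_eq]
  tauto

theorem filter_pushin (V D : Type*) (A B : Set (V → Option D))
    (R : (V → Option D) → Prop)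
    (hsafe : ∀ μ₁ ∈ A, ∀ μ : V → Option D, Subsumes μ₁ μ → (R μ ↔ R μ₁)) :
    {μ ∈ leftJoinSet A B | R μ} = leftJoinSet {μ ∈ A | R μ} B := by
  rw [leftJoinSet, leftJoinSet, ← sep_joinSet hsafe, ← sep_diffSet]
  exact Set.sep_union
end

section
/- For all sets A and B of solution mappings, A ⟕ (B ⋉ A) = A ⟕ B; that is, pruning a slave (OPTIONAL) pattern by transferring variable-binding constraints from its master via a semi-join does not change the results of the left outer join. -/
/- A mapping of `B` with no compatible partner in `A` contributes neither to `A ⋈ B` nor to the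
compatibility test of `A ∖ B`, so the semi-join only removes mappings that `A ⟕ B` ignores. -/

theorem Compatible.symm {V D : Type*} {μ₁ μ₂ : V → Option D} (h : Compatible μ₁ μ₂) :
    Compatible μ₂ μ₁ := fun v => by
  rcases h v with h | h | h
  exacts [Or.inr (Or.inl h), Or.inl h, Or.inr (Or.inr h.symm)]

section SemiJoin

variable {V D : Type*} {A B : Set (V → Option D)}

theorem semiJoin_subset_left : semiJoin B A ⊆ B := fun _ h => h.1

theorem joinSet_semiJoin_right : joinSet A (semiJoin B A) = joinSet A B := by
  ext μ
  constructor
  · rintro ⟨μ₁, h₁, μ₂, h₂, hc, rfl⟩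
    exact ⟨μ₁, h₁, μ₂, semiJoin_subset_left h₂, hc, rfl⟩
  · rintro ⟨μ₁, h₁, μ₂, h₂, hc, rfl⟩
    exact ⟨μ₁, h₁, μ₂, ⟨h₂, μ₁, h₁, hc.symm⟩, hc, rfl⟩

theorem diffSet_semiJoin_right : diffSet A (semiJoin B A) = diffSet A B := by
  ext μ
  constructor
  · rintro ⟨hA, hnone⟩
    exact ⟨hA, fun μ₂ hB hc => hnone μ₂ ⟨hB, μ, hA, hc.symm⟩ hc⟩
  · rintro ⟨hA, hnone⟩
    exact ⟨hA, fun μ₂ h₂ => hnone μ₂ (semiJoin_subset_left h₂)⟩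

end SemiJoin

theorem slave_semijoin_prune_leftjoin (V D : Type*) (A B : Set (V → Option D)) :
    leftJoinSet A (semiJoin B A) = leftJoinSet A B := by
  rw [leftJoinSet, leftJoinSet, joinSet_semiJoin_right, diffSet_semiJoin_right]
end

section
/- Let A, B, C be sets of solution mappings and S_A, S_B, S_C ⊆ V be such that every mapping in A has support S_A, every mapping in B has support S_B, every mapping in C has support S_C, and S_A ∩ S_C ⊆ S_B (a path-shaped acyclic join query A–B–C). Define B₁ = B ⋉ C, A₁ = A ⋉ B₁, B₂ = B₁ ⋉ A₁, and C₁ = C ⋉ B₂ (a bottom-up pass of semi-joins followed by a top-down pass along the path). Then (A₁ ⋈ B₂) ⋈ C₁ = (A ⋈ B) ⋈ C; that is, the full-reducer semi-join sequence preserves the join results. -/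
/-!
A semi-join only deletes mappings that have no compatible partner in the other relation. A triple
`μa ∈ A`, `μb ∈ B`, `μc ∈ C` that contributes to the join is pairwise compatible along the path
`A – B – C`, so each member keeps a partner at every stage of the reducer and survives it.
-/

namespace Compatible

variable {V D : Type*} {μ₁ μ₂ μ₃ : V → Option D}

protected lemma symm_s17 (h : Compatible μ₁ μ₂) : Compatible μ₂ μ₁ := fun v => by
  rcases h v with h | h | h <;> simp [h]

lemma of_mergeMap_left (h₁₂ : Compatible μ₁ μ₂) (h : Compatible (mergeMap μ₁ μ₂) μ₃) :
    Compatible μ₂ μ₃ := by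
  intro v
  specialize h v
  cases h₁ : μ₁ v with
  | none => simpa [mergeMap, h₁] using h
  | some a =>
    cases h₂ : μ₂ v with
    | none => exact Or.inl rfl
    | some b =>
      have hab : a = b := by simpa [h₁, h₂] using h₁₂ v
      subst hab
      simpa [mergeMap, h₁] using h

end Compatible

section

variable {V D : Type*}

lemma semiJoin_subset (A B : Set (V → Option D)) : semiJoin A B ⊆ A := fun _ h => h.1

lemma joinSet_mono {A A' B B' : Set (V → Option D)} (hA : A' ⊆ A) (hB : B' ⊆ B) :
    joinSet A' B' ⊆ joinSet A B := by
  rintro _ ⟨μ₁, h₁, μ₂, h₂, h₁₂, rfl⟩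
  exact ⟨μ₁, hA h₁, μ₂, hB h₂, h₁₂, rfl⟩

end

theorem full_reducer_preserves_join_general (V D : Type*)
    (A B C : Set (V → Option D))
    (B₁ A₁ B₂ C₁ : Set (V → Option D))
    (hB₁ : B₁ = semiJoin B C) (hA₁ : A₁ = semiJoin A B₁)
    (hB₂ : B₂ = semiJoin B₁ A₁) (hC₁ : C₁ = semiJoin C B₂) :
    joinSet (joinSet A₁ B₂) C₁ = joinSet (joinSet A B) C := by
  subst hB₁ hA₁ hB₂ hC₁
  apply Set.Subset.antisymm
  · exact joinSet_mono (joinSet_mono (semiJoin_subset _ _)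
      ((semiJoin_subset _ _).trans (semiJoin_subset _ _))) (semiJoin_subset _ _)
  · rintro _ ⟨_, ⟨μa, ha, μb, hb, hab, rfl⟩, μc, hc, habc, rfl⟩
    have hbc : Compatible μb μc := hab.of_mergeMap_left habc
    have hb₁ : μb ∈ semiJoin B C := ⟨hb, μc, hc, hbc⟩
    have ha₁ : μa ∈ semiJoin A (semiJoin B C) := ⟨ha, μb, hb₁, hab⟩
    have hb₂ : μb ∈ semiJoin (semiJoin B C) (semiJoin A (semiJoin B C)) :=
      ⟨hb₁, μa, ha₁, hab.symm_s17⟩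
    have hc₁ : μc ∈ semiJoin C _ := ⟨hc, μb, hb₂, hbc.symm_s17⟩
    exact ⟨_, ⟨μa, ha₁, μb, hb₂, hab, rfl⟩, μc, hc₁, habc, rfl⟩

theorem full_reducer_preserves_join (V D : Type*)
    (A B C : Set (V → Option D)) (SA SB SC : Set V)
    (hA : ∀ μ ∈ A, {v | μ v ≠ none} = SA)
    (hB : ∀ μ ∈ B, {v | μ v ≠ none} = SB)
    (hC : ∀ μ ∈ C, {v | μ v ≠ none} = SC)
    (hpath : SA ∩ SC ⊆ SB)
    (B₁ A₁ B₂ C₁ : Set (V → Option D))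
    (hB₁ : B₁ = semiJoin B C) (hA₁ : A₁ = semiJoin A B₁)
    (hB₂ : B₂ = semiJoin B₁ A₁) (hC₁ : C₁ = semiJoin C B₂) :
    joinSet (joinSet A₁ B₂) C₁ = joinSet (joinSet A B) C :=
  full_reducer_preserves_join_general V D A B C B₁ A₁ B₂ C₁ hB₁ hA₁ hB₂ hC₁
end
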